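/- arXiv:2105.09224 — 9 statements merged into one kernel-verified Lean document; each statement's English description precedes it below -/
import Mathlib

section
/- A G-graded ring S is strongly G-graded if and only if for every x in G the equalities S_x S_e = S_e S_x = S_x and S_x S_{x^{-1}} = S_e hold. -/
open Pointwise

/-- The product `UV` of two subsets of a ring: the additive subgroup consisting of all
finite sums of products `u * v` with `u ∈ U`, `v ∈ V`. -/
def setProd {S : Type*} [NonUnitalRing S] (U V : Set S) : AddSubgroup S :=
  AddSubgroup.closure (U * V)

/-- A `G`-graded ring `S` is strongly `G`-graded (i.e. `S_x S_y = S_{xy}` for all `x, y ∈ G`)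
if and only if for every `x ∈ G` the equalities `S_x S_e = S_e S_x = S_x` and
`S_x S_{x⁻¹} = S_e` hold. -/
theorem strongly_graded_iff {G : Type*} [Group G] [DecidableEq G]
    {S : Type*} [NonUnitalRing S] (𝒮 : G → AddSubgroup S)
    [DirectSum.Decomposition 𝒮]
    (hmul : ∀ {x y : G} {a b : S}, a ∈ 𝒮 x → b ∈ 𝒮 y → a * b ∈ 𝒮 (x * y)) :
    (∀ x y : G, setProd (𝒮 x : Set S) (𝒮 y : Set S) = 𝒮 (x * y)) ↔
      (∀ x : G, setProd (𝒮 x : Set S) (𝒮 (1 : G) : Set S) = 𝒮 x ∧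
        setProd (𝒮 (1 : G) : Set S) (𝒮 x : Set S) = 𝒮 x ∧
        setProd (𝒮 x : Set S) (𝒮 x⁻¹ : Set S) = 𝒮 (1 : G)) := by
  constructor
  · intro h x
    refine ⟨?_, ?_, ?_⟩
    · simpa using h x 1
    · simpa using h 1 x
    · simpa using h x x⁻¹
  · intro h x y
    apply le_antisymm
    · apply (AddSubgroup.closure_le _).2
      rintro _ ⟨a, ha, b, hb, rfl⟩
      exact hmul ha hb
    · have h1 : setProd ((𝒮 (x * y) : Set S)) (𝒮 (1 : G) : Set S) = 𝒮 (x * y) :=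
        (h (x * y)).1
      have h2 : setProd ((𝒮 y⁻¹ : Set S)) (𝒮 y : Set S) = 𝒮 (1 : G) := by
        have := (h y⁻¹).2.2
        rwa [inv_inv] at this
      rw [← h1, ← h2]
      apply (AddSubgroup.closure_le _).2
      rintro _ ⟨a, ha, w, hw, rfl⟩
      have hw' : w ∈ AddSubgroup.closure ((𝒮 y⁻¹ : Set S) * (𝒮 y : Set S)) := hw
      refine AddSubgroup.closure_induction
        (p := fun w _ => a * w ∈ (setProd (𝒮 x : Set S) (𝒮 y : Set S) : Set S))
        ?_ ?_ ?_ ?_ hw'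
      · rintro _ ⟨b, hb, c, hc, rfl⟩
        show a * (b * c) ∈ _
        rw [← mul_assoc]
        have hab : a * b ∈ 𝒮 x := by
          have := hmul ha hb
          rwa [mul_assoc, mul_inv_cancel, mul_one] at this
        exact AddSubgroup.subset_closure ⟨a * b, hab, c, hc, rfl⟩
      · simpa using (setProd (𝒮 x : Set S) (𝒮 y : Set S)).zero_mem
      · intro u v _ _ hu hv
        show a * (u + v) ∈ _
        rw [mul_add]; exact add_mem hu hv
      · intro u _ hu
        show a * (-u) ∈ _
        rw [mul_neg]; exact neg_mem hu
end

section
/- A ring R is s-unital (i.e., r ∈ rR ∩ Rr for every r ∈ R) if and only if for every finite subset V of R there exists u ∈ R such that uv = vu = v for every v ∈ V. -/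
/-- The additive closure of `{r * s | s}` is just the range of left multiplication. -/
lemma sUnital_aux_mem_left {R : Type*} [NonUnitalRing R] (r : R) :
    r ∈ AddSubgroup.closure (Set.range fun s => r * s) ↔ ∃ s : R, r * s = r := by
  have hset : (Set.range fun s : R => r * s) = ((AddMonoidHom.mulLeft r).range : Set R) := by
    ext x; simp [AddMonoidHom.mem_range, AddMonoidHom.mulLeft, eq_comm]
  rw [hset, AddSubgroup.closure_eq]
  simp [AddMonoidHom.mem_range, AddMonoidHom.mulLeft]

lemma sUnital_aux_mem_right {R : Type*} [NonUnitalRing R] (r : R) :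
    r ∈ AddSubgroup.closure (Set.range fun s => s * r) ↔ ∃ s : R, s * r = r := by
  have hset : (Set.range fun s : R => s * r) = ((AddMonoidHom.mulRight r).range : Set R) := by
    ext x; simp [AddMonoidHom.mem_range, AddMonoidHom.mulRight, eq_comm]
  rw [hset, AddSubgroup.closure_eq]
  simp [AddMonoidHom.mem_range, AddMonoidHom.mulRight]

/-- Left local units for finite sets from pointwise left units. -/
lemma sUnital_aux_left {R : Type*} [NonUnitalRing R] (h : ∀ r : R, ∃ s : R, s * r = r) :
    ∀ V : Finset R, ∃ u : R, ∀ v ∈ V, u * v = v := by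
  intro V
  classical
  induction V using Finset.induction with
  | empty => exact ⟨0, by simp⟩
  | @insert a s ha ih =>
    obtain ⟨u, hu⟩ := ih
    obtain ⟨e, he⟩ := h (a - u * a)
    refine ⟨u + e - e * u, ?_⟩
    intro v hv
    rcases Finset.mem_insert.mp hv with rfl | hv
    · have expand : (u + e - e * u) * v = u * v + (e * v - e * (u * v)) := by noncomm_ring
      rw [mul_sub] at he
      rw [expand, he]
      abel
    · have hv' := hu v hv
      have expand : (u + e - e * u) * v = u * v + (e * v - e * (u * v)) := by noncomm_ring
      rw [expand, hv']
      abel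

lemma sUnital_aux_right {R : Type*} [NonUnitalRing R] (h : ∀ r : R, ∃ s : R, r * s = r) :
    ∀ V : Finset R, ∃ u : R, ∀ v ∈ V, v * u = v := by
  intro V
  classical
  induction V using Finset.induction with
  | empty => exact ⟨0, by simp⟩
  | @insert a s ha ih =>
    obtain ⟨u, hu⟩ := ih
    obtain ⟨e, he⟩ := h (a - a * u)
    refine ⟨u + e - u * e, ?_⟩
    intro v hv
    rcases Finset.mem_insert.mp hv with rfl | hv
    · have expand : v * (u + e - u * e) = v * u + (v * e - (v * u) * e) := by noncomm_ring
      rw [sub_mul] at he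
      rw [expand, he]
      abel
    · have hv' := hu v hv
      have expand : v * (u + e - u * e) = v * u + (v * e - (v * u) * e) := by noncomm_ring
      rw [expand, hv']
      abel

/-- A (not necessarily unital) ring `R` is `s`-unital, i.e. `r ∈ rR ∩ Rr` for every `r ∈ R`
(where `rR` denotes the set of finite sums of products `r * s`, and `Rr` analogously),
if and only if for every finite subset `V` of `R` there exists `u ∈ R` such that
`u * v = v * u = v` for every `v ∈ V`. -/
theorem sUnital_iff_finset (R : Type*) [NonUnitalRing R] :
    (∀ r : R, r ∈ AddSubgroup.closure (Set.range fun s => r * s) ∧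
        r ∈ AddSubgroup.closure (Set.range fun s => s * r)) ↔
    (∀ V : Finset R, ∃ u : R, ∀ v ∈ V, u * v = v ∧ v * u = v) := by
  constructor
  · intro h V
    obtain ⟨u, hu⟩ := sUnital_aux_left
      (fun r => (sUnital_aux_mem_right r).mp (h r).2) V
    obtain ⟨u', hu'⟩ := sUnital_aux_right
      (fun r => (sUnital_aux_mem_left r).mp (h r).1) V
    refine ⟨u + u' - u' * u, fun v hv => ⟨?_, ?_⟩⟩
    · have expand : (u + u' - u' * u) * v = u * v + (u' * v - u' * (u * v)) := by noncomm_ring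
      rw [expand, hu v hv]; abel
    · have expand : v * (u + u' - u' * u) = v * u' + (v * u - (v * u') * u) := by noncomm_ring
      rw [expand, hu' v hv]; abel
  · intro h r
    obtain ⟨u, hu⟩ := h {r}
    obtain ⟨h1, h2⟩ := hu r (Finset.mem_singleton_self r)
    exact ⟨(sUnital_aux_mem_left r).mpr ⟨u, h2⟩, (sUnital_aux_mem_right r).mpr ⟨u, h1⟩⟩
end

section
/- If S is nearly epsilon-strongly G-graded, then s ∈ sS_e ∩ S_e s for every s ∈ S; in particular, S is s-unital and S_e is an s-unital subring of S. -/
open Pointwise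

/-- If `S` is nearly epsilon-strongly `G`-graded, then `s ∈ s S_e ∩ S_e s` for every `s ∈ S`.
In particular, `S` is `s`-unital and the principal component `S_e` is an `s`-unital subring
of `S`. -/
theorem nearly_epsilon_strong_sUnital {G : Type*} [Group G] [DecidableEq G]
    {S : Type*} [NonUnitalRing S] (𝒮 : G → AddSubgroup S)
    [DirectSum.Decomposition 𝒮]
    (hmul : ∀ {x y : G} {a b : S}, a ∈ 𝒮 x → b ∈ 𝒮 y → a * b ∈ 𝒮 (x * y))
    (hnes : ∀ x : G, ∀ s ∈ 𝒮 x,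
      (∃ ε ∈ setProd (𝒮 x : Set S) (𝒮 x⁻¹ : Set S), ε * s = s) ∧
      (∃ ε' ∈ setProd (𝒮 x⁻¹ : Set S) (𝒮 x : Set S), s * ε' = s)) :
    (∀ s : S, s ∈ setProd {s} (𝒮 (1 : G) : Set S) ∧
        s ∈ setProd (𝒮 (1 : G) : Set S) {s}) ∧
    (∀ s : S, s ∈ setProd {s} (Set.univ : Set S) ∧
        s ∈ setProd (Set.univ : Set S) {s}) ∧
    (∀ s : S, s ∈ 𝒮 (1 : G) →
      (∃ u ∈ 𝒮 (1 : G), s * u = s) ∧ (∃ u ∈ 𝒮 (1 : G), u * s = s)) := by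
  classical
  -- the product of components lands in the expected component
  have hincl : ∀ x y : G, setProd (𝒮 x : Set S) (𝒮 y : Set S) ≤ 𝒮 (x * y) := by
    intro x y
    refine (AddSubgroup.closure_le _).mpr ?_
    rintro t ht
    rcases Set.mem_mul.mp ht with ⟨a, ha, b, hb, rfl⟩
    exact hmul ha hb
  -- right local units in 𝒮 1 for homogeneous elements
  have hright : ∀ x : G, ∀ b ∈ 𝒮 x, ∃ v ∈ 𝒮 (1 : G), b * v = b := by
    intro x b hb
    obtain ⟨ε', hε', hbε'⟩ := (hnes x b hb).2
    refine ⟨ε', ?_, hbε'⟩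
    have := hincl x⁻¹ x hε'
    rwa [inv_mul_cancel] at this
  have hleft : ∀ x : G, ∀ b ∈ 𝒮 x, ∃ v ∈ 𝒮 (1 : G), v * b = b := by
    intro x b hb
    obtain ⟨ε, hε, hbε⟩ := (hnes x b hb).1
    refine ⟨ε, ?_, hbε⟩
    have := hincl x x⁻¹ hε
    rwa [mul_inv_cancel] at this
  -- common right unit for finitely many homogeneous elements
  have hRcommon : ∀ (F : Finset G) (f : G → S), (∀ x ∈ F, f x ∈ 𝒮 x) →
      ∃ u ∈ 𝒮 (1 : G), ∀ x ∈ F, f x * u = f x := by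
    intro F
    induction F using Finset.induction_on with
    | empty => exact fun f _ => ⟨0, (𝒮 (1 : G)).zero_mem, fun x hx => absurd hx (by simp)⟩
    | @insert x F hxF ih =>
      intro f hf
      obtain ⟨u, hu, hu'⟩ := ih f (fun y hy => hf y (Finset.mem_insert_of_mem hy))
      have hfx : f x ∈ 𝒮 x := hf x (Finset.mem_insert_self x F)
      have hbmem : f x - f x * u ∈ 𝒮 x := by
        refine (𝒮 x).sub_mem hfx ?_
        have := hmul hfx hu
        rwa [mul_one] at this
      obtain ⟨v, hv, hbv⟩ := hright x _ hbmem
      refine ⟨u + v - u * v, ?_, ?_⟩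
      · have h1 : u * v ∈ 𝒮 (1 : G) := by
          have := hmul hu hv; rwa [mul_one] at this
        exact (𝒮 (1 : G)).sub_mem ((𝒮 (1 : G)).add_mem hu hv) h1
      · intro y hy
        rcases Finset.mem_insert.mp hy with rfl | hy
        · have e1 : f y * (u + v - u * v) = f y * u + f y * v - f y * u * v := by
            rw [mul_sub, mul_add, mul_assoc]
          have e2 : f y * v = (f y - f y * u) * v + f y * u * v := by
            rw [sub_mul]; abel
          rw [e1, e2, hbv]; abel
        · have hyu : f y * u = f y := hu' y hy
          rw [mul_sub, mul_add, ← mul_assoc, hyu]; abel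
  -- common left unit for finitely many homogeneous elements
  have hLcommon : ∀ (F : Finset G) (f : G → S), (∀ x ∈ F, f x ∈ 𝒮 x) →
      ∃ u ∈ 𝒮 (1 : G), ∀ x ∈ F, u * f x = f x := by
    intro F
    induction F using Finset.induction_on with
    | empty => exact fun f _ => ⟨0, (𝒮 (1 : G)).zero_mem, fun x hx => absurd hx (by simp)⟩
    | @insert x F hxF ih =>
      intro f hf
      obtain ⟨u, hu, hu'⟩ := ih f (fun y hy => hf y (Finset.mem_insert_of_mem hy))
      have hfx : f x ∈ 𝒮 x := hf x (Finset.mem_insert_self x F)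
      have hbmem : f x - u * f x ∈ 𝒮 x := by
        refine (𝒮 x).sub_mem hfx ?_
        have := hmul hu hfx
        rwa [one_mul] at this
      obtain ⟨v, hv, hbv⟩ := hleft x _ hbmem
      refine ⟨u + v - v * u, ?_, ?_⟩
      · have h1 : v * u ∈ 𝒮 (1 : G) := by
          have := hmul hv hu; rwa [mul_one] at this
        exact (𝒮 (1 : G)).sub_mem ((𝒮 (1 : G)).add_mem hu hv) h1
      · intro y hy
        rcases Finset.mem_insert.mp hy with rfl | hy
        · have e1 : (u + v - v * u) * f y = u * f y + v * f y - v * (u * f y) := by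
            rw [sub_mul, add_mul, mul_assoc]
          have e2 : v * f y = v * (f y - u * f y) + v * (u * f y) := by
            rw [mul_sub]; abel
          rw [e1, e2, hbv]; abel
        · have hyu : u * f y = f y := hu' y hy
          rw [sub_mul, add_mul, mul_assoc, hyu]; abel
  -- every element of S has a right and a left unit in 𝒮 1
  have hmain : ∀ s : S, (∃ u ∈ 𝒮 (1 : G), s * u = s) ∧ (∃ u ∈ 𝒮 (1 : G), u * s = s) := by
    intro s
    set F := (DirectSum.decompose 𝒮 s).support with hF
    have hcomp : ∀ x ∈ F, ((DirectSum.decompose 𝒮 s) x : S) ∈ 𝒮 x :=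
      fun x _ => SetLike.coe_mem _
    have hsum : ∑ x ∈ F, ((DirectSum.decompose 𝒮 s) x : S) = s :=
      DirectSum.sum_support_decompose 𝒮 s
    constructor
    · obtain ⟨u, hu, hu'⟩ := hRcommon F _ hcomp
      refine ⟨u, hu, ?_⟩
      calc s * u = (∑ x ∈ F, ((DirectSum.decompose 𝒮 s) x : S)) * u := by rw [hsum]
        _ = ∑ x ∈ F, ((DirectSum.decompose 𝒮 s) x : S) * u := Finset.sum_mul ..
        _ = ∑ x ∈ F, ((DirectSum.decompose 𝒮 s) x : S) := Finset.sum_congr rfl hu'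
        _ = s := hsum
    · obtain ⟨u, hu, hu'⟩ := hLcommon F _ hcomp
      refine ⟨u, hu, ?_⟩
      calc u * s = u * ∑ x ∈ F, ((DirectSum.decompose 𝒮 s) x : S) := by rw [hsum]
        _ = ∑ x ∈ F, u * ((DirectSum.decompose 𝒮 s) x : S) := Finset.mul_sum ..
        _ = ∑ x ∈ F, ((DirectSum.decompose 𝒮 s) x : S) := Finset.sum_congr rfl hu'
        _ = s := hsum
  refine ⟨?_, ?_, ?_⟩
  · intro s
    obtain ⟨⟨u, hu, hsu⟩, ⟨v, hv, hvs⟩⟩ := hmain s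
    constructor
    · exact AddSubgroup.subset_closure ⟨s, rfl, u, hu, hsu⟩
    · exact AddSubgroup.subset_closure ⟨v, hv, s, rfl, hvs⟩
  · intro s
    obtain ⟨⟨u, hu, hsu⟩, ⟨v, hv, hvs⟩⟩ := hmain s
    constructor
    · exact AddSubgroup.subset_closure ⟨s, rfl, u, Set.mem_univ u, hsu⟩
    · exact AddSubgroup.subset_closure ⟨v, Set.mem_univ v, s, rfl, hvs⟩
  · intro s _
    exact (hmain s)
end

section
/- If S is an s-unital strongly G-graded ring, then S is nearly epsilon-strongly G-graded, s ∈ sS_e ∩ S_e s for every s ∈ S, and the right annihilator of S_x in S is zero for every x ∈ G. -/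
open Pointwise

/-!
If `s = t s` and `s` has degree `x`, comparing degree-`x` components gives `s = t₁ s` with
`t₁ ∈ S₁ = S_x S_{x⁻¹}`. An arbitrary `s` gets a local unit in `S₁` common to its finitely
many homogeneous components, by Tominaga's trick: if `e₁` is a unit for some of them and `e₂`
one for the defect `f - e₁ f` of the next one `f`, then `e₁ + e₂ - e₂ e₁` serves for all.
Finally, if `S_x s = 0` then `S₁ s = S_{x⁻¹} S_x s = 0`, so `s = e s = 0` for a unit `e ∈ S₁`.
-/

section SetProd

variable {S : Type*} [NonUnitalRing S]

theorem mul_mem_setProd {U V : Set S} {a b : S} (ha : a ∈ U) (hb : b ∈ V) :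
    a * b ∈ setProd U V :=
  AddSubgroup.subset_closure (Set.mul_mem_mul ha hb)

theorem exists_mul_eq_of_mem_setProd_singleton_univ {a s : S}
    (h : s ∈ setProd {a} (Set.univ : Set S)) : ∃ t, a * t = s := by
  have : setProd {a} (Set.univ : Set S) ≤ (AddMonoidHom.mulLeft a).range := by
    refine (AddSubgroup.closure_le _).2 ?_
    rintro _ ⟨_, rfl, t, -, rfl⟩
    exact ⟨t, rfl⟩
  exact this h

theorem exists_mul_eq_of_mem_setProd_univ_singleton {a s : S}
    (h : s ∈ setProd (Set.univ : Set S) {a}) : ∃ t, t * a = s := by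
  have : setProd (Set.univ : Set S) {a} ≤ (AddMonoidHom.mulRight a).range := by
    refine (AddSubgroup.closure_le _).2 ?_
    rintro _ ⟨t, -, _, rfl, rfl⟩
    exact ⟨t, rfl⟩
  exact this h

theorem mul_eq_zero_of_mem_setProd {U V : Set S} {s c : S} (hV : ∀ b ∈ V, b * s = 0)
    (hc : c ∈ setProd U V) : c * s = 0 := by
  induction hc using AddSubgroup.closure_induction with
  | mem _ h =>
    obtain ⟨a, -, b, hb, rfl⟩ := h
    rw [mul_assoc, hV b hb, mul_zero]
  | zero => exact zero_mul s
  | add _ _ _ _ h₁ h₂ => rw [add_mul, h₁, h₂, add_zero]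
  | neg _ _ h => rw [neg_mul, h, neg_zero]

theorem NonUnitalSubring.exists_common_left_unit {ι : Type*} (A : NonUnitalSubring S)
    (M : ι → AddSubgroup S) (hM : ∀ i, ∀ m ∈ M i, ∀ a ∈ A, a * m ∈ M i)
    (hunit : ∀ i, ∀ m ∈ M i, ∃ e ∈ A, e * m = m) (F : Finset ι) {f : ι → S}
    (hf : ∀ i ∈ F, f i ∈ M i) : ∃ e ∈ A, ∀ i ∈ F, e * f i = f i := by
  classical
  induction F using Finset.induction_on with
  | empty => exact ⟨0, zero_mem _, by simp⟩
  | @insert j F _ ih =>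
    obtain ⟨e₁, he₁, hF⟩ := ih fun i hi => hf i (Finset.mem_insert_of_mem hi)
    have hj := hf j (Finset.mem_insert_self j F)
    obtain ⟨e₂, he₂, hdefect⟩ := hunit j _ (sub_mem hj (hM j _ hj e₁ he₁))
    refine ⟨e₁ + e₂ - e₂ * e₁, sub_mem (add_mem he₁ he₂) (mul_mem he₂ he₁), ?_⟩
    intro i hi
    rcases Finset.mem_insert.1 hi with rfl | hi
    · rw [sub_mul, add_mul, mul_assoc, add_sub_assoc, ← mul_sub, hdefect]
      abel
    · rw [sub_mul, add_mul, mul_assoc, hF i hi]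
      abel

theorem NonUnitalSubring.exists_common_right_unit {ι : Type*} (A : NonUnitalSubring S)
    (M : ι → AddSubgroup S) (hM : ∀ i, ∀ m ∈ M i, ∀ a ∈ A, m * a ∈ M i)
    (hunit : ∀ i, ∀ m ∈ M i, ∃ e ∈ A, m * e = m) (F : Finset ι) {f : ι → S}
    (hf : ∀ i ∈ F, f i ∈ M i) : ∃ e ∈ A, ∀ i ∈ F, f i * e = f i := by
  classical
  induction F using Finset.induction_on with
  | empty => exact ⟨0, zero_mem _, by simp⟩
  | @insert j F _ ih =>
    obtain ⟨e₁, he₁, hF⟩ := ih fun i hi => hf i (Finset.mem_insert_of_mem hi)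
    have hj := hf j (Finset.mem_insert_self j F)
    obtain ⟨e₂, he₂, hdefect⟩ := hunit j _ (sub_mem hj (hM j _ hj e₁ he₁))
    refine ⟨e₁ + e₂ - e₁ * e₂, sub_mem (add_mem he₁ he₂) (mul_mem he₁ he₂), ?_⟩
    intro i hi
    rcases Finset.mem_insert.1 hi with rfl | hi
    · rw [mul_sub, mul_add, ← mul_assoc, add_sub_assoc, ← sub_mul, hdefect]
      abel
    · rw [mul_sub, mul_add, ← mul_assoc, hF i hi]
      abel

end SetProd

section Graded

variable {G : Type*} [CancelMonoid G] [DecidableEq G] {S : Type*} [NonUnitalRing S]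
  (𝒮 : G → AddSubgroup S) [DirectSum.Decomposition 𝒮]

theorem coe_decompose_mul_of_right_mem_same
    (hmul : ∀ {x y : G} {a b : S}, a ∈ 𝒮 x → b ∈ 𝒮 y → a * b ∈ 𝒮 (x * y))
    {x : G} {s : S} (hs : s ∈ 𝒮 x) (t : S) :
    (DirectSum.decompose 𝒮 (t * s) x : S) = (DirectSum.decompose 𝒮 t 1 : S) * s := by
  induction t using DirectSum.Decomposition.inductionOn 𝒮 with
  | zero => simp
  | @homogeneous y t =>
    by_cases hy : y = 1
    · subst hy
      rw [DirectSum.decompose_of_mem_same 𝒮 t.2,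
        DirectSum.decompose_of_mem_same 𝒮 (by simpa using hmul t.2 hs)]
    · rw [DirectSum.decompose_of_mem_ne 𝒮 t.2 hy, zero_mul,
        DirectSum.decompose_of_mem_ne 𝒮 (hmul t.2 hs) (by simpa using hy)]
  | add t t' ht ht' =>
    simp only [add_mul, DirectSum.decompose_add, DirectSum.add_apply, AddSubgroup.coe_add, ht, ht']

theorem coe_decompose_mul_of_left_mem_same
    (hmul : ∀ {x y : G} {a b : S}, a ∈ 𝒮 x → b ∈ 𝒮 y → a * b ∈ 𝒮 (x * y))
    {x : G} {s : S} (hs : s ∈ 𝒮 x) (t : S) :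
    (DirectSum.decompose 𝒮 (s * t) x : S) = s * (DirectSum.decompose 𝒮 t 1 : S) := by
  induction t using DirectSum.Decomposition.inductionOn 𝒮 with
  | zero => simp
  | @homogeneous y t =>
    by_cases hy : y = 1
    · subst hy
      rw [DirectSum.decompose_of_mem_same 𝒮 t.2,
        DirectSum.decompose_of_mem_same 𝒮 (by simpa using hmul hs t.2)]
    · rw [DirectSum.decompose_of_mem_ne 𝒮 t.2 hy, mul_zero,
        DirectSum.decompose_of_mem_ne 𝒮 (hmul hs t.2) (by simpa using hy)]
  | add t t' ht ht' =>
    simp only [mul_add, DirectSum.decompose_add, DirectSum.add_apply, AddSubgroup.coe_add, ht, ht']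

theorem exists_left_unit_of_mem
    (hmul : ∀ {x y : G} {a b : S}, a ∈ 𝒮 x → b ∈ 𝒮 y → a * b ∈ 𝒮 (x * y))
    {x : G} {s t : S} (hs : s ∈ 𝒮 x) (ht : t * s = s) : ∃ e ∈ 𝒮 1, e * s = s :=
  ⟨_, SetLike.coe_mem (DirectSum.decompose 𝒮 t 1), by
    rw [← coe_decompose_mul_of_right_mem_same 𝒮 hmul hs, ht,
      DirectSum.decompose_of_mem_same 𝒮 hs]⟩

theorem exists_right_unit_of_mem
    (hmul : ∀ {x y : G} {a b : S}, a ∈ 𝒮 x → b ∈ 𝒮 y → a * b ∈ 𝒮 (x * y))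
    {x : G} {s t : S} (hs : s ∈ 𝒮 x) (ht : s * t = s) : ∃ e ∈ 𝒮 1, s * e = s :=
  ⟨_, SetLike.coe_mem (DirectSum.decompose 𝒮 t 1), by
    rw [← coe_decompose_mul_of_left_mem_same 𝒮 hmul hs, ht,
      DirectSum.decompose_of_mem_same 𝒮 hs]⟩

theorem exists_left_unit
    (hmul : ∀ {x y : G} {a b : S}, a ∈ 𝒮 x → b ∈ 𝒮 y → a * b ∈ 𝒮 (x * y))
    (hunit : ∀ s : S, ∃ t, t * s = s) (s : S) : ∃ e ∈ 𝒮 1, e * s = s := by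
  classical
  let A : NonUnitalSubring S := { 𝒮 1 with mul_mem' := fun ha hb => by simpa using hmul ha hb }
  obtain ⟨e, he, hcomp⟩ := A.exists_common_left_unit 𝒮
    (fun _ _ hm _ ha => by simpa using hmul ha hm)
    (fun _ m hm => (hunit m).elim fun _ ht => exists_left_unit_of_mem 𝒮 hmul hm ht)
    (DirectSum.decompose 𝒮 s).support (fun _ _ => SetLike.coe_mem _)
  refine ⟨e, he, ?_⟩
  conv_lhs => rw [← DirectSum.sum_support_decompose 𝒮 s]
  rw [Finset.mul_sum, Finset.sum_congr rfl hcomp, DirectSum.sum_support_decompose]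

theorem exists_right_unit
    (hmul : ∀ {x y : G} {a b : S}, a ∈ 𝒮 x → b ∈ 𝒮 y → a * b ∈ 𝒮 (x * y))
    (hunit : ∀ s : S, ∃ t, s * t = s) (s : S) : ∃ e ∈ 𝒮 1, s * e = s := by
  classical
  let A : NonUnitalSubring S := { 𝒮 1 with mul_mem' := fun ha hb => by simpa using hmul ha hb }
  obtain ⟨e, he, hcomp⟩ := A.exists_common_right_unit 𝒮
    (fun _ _ hm _ ha => by simpa using hmul hm ha)
    (fun _ m hm => (hunit m).elim fun _ ht => exists_right_unit_of_mem 𝒮 hmul hm ht)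
    (DirectSum.decompose 𝒮 s).support (fun _ _ => SetLike.coe_mem _)
  refine ⟨e, he, ?_⟩
  conv_lhs => rw [← DirectSum.sum_support_decompose 𝒮 s]
  rw [Finset.sum_mul, Finset.sum_congr rfl hcomp, DirectSum.sum_support_decompose]

end Graded

/-- If `S` is an `s`-unital strongly `G`-graded ring, then (a) `S` is nearly epsilon-strongly
`G`-graded, (b) `s ∈ s S_e ∩ S_e s` for every `s ∈ S`, and (c) the right annihilator of
`S_x` in `S` is zero for every `x ∈ G`. -/
theorem sUnital_strongly_graded_properties {G : Type*} [Group G] [DecidableEq G]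
    {S : Type*} [NonUnitalRing S] (𝒮 : G → AddSubgroup S)
    [DirectSum.Decomposition 𝒮]
    (hmul : ∀ {x y : G} {a b : S}, a ∈ 𝒮 x → b ∈ 𝒮 y → a * b ∈ 𝒮 (x * y))
    (hstrong : ∀ x y : G, setProd (𝒮 x : Set S) (𝒮 y : Set S) = 𝒮 (x * y))
    (hsu : ∀ s : S, s ∈ setProd {s} (Set.univ : Set S) ∧
        s ∈ setProd (Set.univ : Set S) {s}) :
    (∀ x : G, ∀ s ∈ 𝒮 x,
      (∃ ε ∈ setProd (𝒮 x : Set S) (𝒮 x⁻¹ : Set S), ε * s = s) ∧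
      (∃ ε' ∈ setProd (𝒮 x⁻¹ : Set S) (𝒮 x : Set S), s * ε' = s)) ∧
    (∀ s : S, s ∈ setProd {s} (𝒮 (1 : G) : Set S) ∧
        s ∈ setProd (𝒮 (1 : G) : Set S) {s}) ∧
    (∀ x : G, ∀ s : S, (∀ a ∈ 𝒮 x, a * s = 0) → s = 0) := by
  have hright (s : S) : ∃ t, s * t = s := exists_mul_eq_of_mem_setProd_singleton_univ (hsu s).1
  have hleft (s : S) : ∃ t, t * s = s := exists_mul_eq_of_mem_setProd_univ_singleton (hsu s).2
  have hstrong_mul_inv (x : G) : setProd (𝒮 x : Set S) (𝒮 x⁻¹) = 𝒮 1 := by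
    rw [hstrong, mul_inv_cancel]
  have hstrong_inv_mul (x : G) : setProd (𝒮 x⁻¹ : Set S) (𝒮 x) = 𝒮 1 := by
    rw [hstrong, inv_mul_cancel]
  refine ⟨fun x s hs => ⟨?_, ?_⟩, fun s => ⟨?_, ?_⟩, fun x s hann => ?_⟩
  · obtain ⟨e, he, hes⟩ := (hleft s).elim fun _ ht => exists_left_unit_of_mem 𝒮 hmul hs ht
    exact ⟨e, hstrong_mul_inv x ▸ he, hes⟩
  · obtain ⟨e, he, hes⟩ := (hright s).elim fun _ ht => exists_right_unit_of_mem 𝒮 hmul hs ht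
    exact ⟨e, hstrong_inv_mul x ▸ he, hes⟩
  · obtain ⟨e, he, hes⟩ := exists_right_unit 𝒮 hmul hright s
    simpa only [hes] using mul_mem_setProd (Set.mem_singleton s) he
  · obtain ⟨e, he, hes⟩ := exists_left_unit 𝒮 hmul hleft s
    simpa only [hes] using mul_mem_setProd he (Set.mem_singleton s)
  · obtain ⟨e, he, hes⟩ := exists_left_unit 𝒮 hmul hleft s
    rw [← hes, mul_eq_zero_of_mem_setProd hann (hstrong_inv_mul x ▸ he)]
end

section
/- If S is nearly epsilon-strongly G-graded, then every ideal I of S_e is ε-invariant, i.e., S_x S_{x^{-1}} I = I S_x S_{x^{-1}} for every x ∈ G. -/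
open Pointwise

/-- `I` is a (two-sided) ideal of the subring `T` of `S`. -/
def IsIdealOfComponent {S : Type*} [NonUnitalRing S] (T : AddSubgroup S)
    (I : AddSubgroup S) : Prop :=
  I ≤ T ∧ ∀ a ∈ T, ∀ b ∈ I, a * b ∈ I ∧ b * a ∈ I

/-!
For `p ∈ S_x`, `q ∈ S_{x⁻¹}` and `i ∈ I`, the element `pqi` lies in `I`, and `qi ∈ S_{x⁻¹}`
has a right local unit `ε' ∈ S_x S_{x⁻¹}`; hence `pqi = (pqi) ε' ∈ I S_x S_{x⁻¹}`.
Symmetrically `ipq = ε (ipq)` with `ε` a left local unit of `ip ∈ S_x`. Since both products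
are biadditive, checking these generators suffices.
-/

section SetProd

variable {S : Type*} [NonUnitalRing S]

theorem mul_mem_setProd_s11 {U V : Set S} {u v : S} (hu : u ∈ U) (hv : v ∈ V) :
    u * v ∈ setProd U V :=
  AddSubgroup.subset_closure (Set.mul_mem_mul hu hv)

theorem setProd_le_iff {U V : Set S} {H : AddSubgroup S} :
    setProd U V ≤ H ↔ ∀ u ∈ U, ∀ v ∈ V, u * v ∈ H :=
  (AddSubgroup.closure_le H).trans Set.mul_subset_iff

theorem setProd_setProd_left (U V W : Set S) :
    setProd (setProd U V : Set S) W = setProd (U * V) W := by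
  refine le_antisymm (setProd_le_iff.mpr fun u hu w hw => ?_)
    (AddSubgroup.closure_mono (Set.mul_subset_mul_right AddSubgroup.subset_closure))
  induction hu using AddSubgroup.closure_induction with
  | mem u hu => exact mul_mem_setProd_s11 hu hw
  | zero => simpa only [zero_mul] using zero_mem _
  | add a b _ _ ha hb => simpa only [add_mul] using add_mem ha hb
  | neg a _ ha => simpa only [neg_mul] using neg_mem ha

theorem setProd_setProd_right (U V W : Set S) :
    setProd U (setProd V W : Set S) = setProd U (V * W) := by
  refine le_antisymm (setProd_le_iff.mpr fun u hu w hw => ?_)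
    (AddSubgroup.closure_mono (Set.mul_subset_mul_left AddSubgroup.subset_closure))
  induction hw using AddSubgroup.closure_induction with
  | mem w hw => exact mul_mem_setProd_s11 hu hw
  | zero => simpa only [mul_zero] using zero_mem _
  | add a b _ _ ha hb => simpa only [mul_add] using add_mem ha hb
  | neg a _ ha => simpa only [mul_neg] using neg_mem ha

end SetProd

section Graded

variable {G : Type*} [Group G] {S : Type*} [NonUnitalRing S] {𝒮 : G → AddSubgroup S}
  {I : AddSubgroup S} {x : G} {p q i : S}

theorem mul_mul_mem_ideal_mul_setProd
    (hmul : ∀ {x y : G} {a b : S}, a ∈ 𝒮 x → b ∈ 𝒮 y → a * b ∈ 𝒮 (x * y))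
    (hunit : ∀ s ∈ 𝒮 x⁻¹, ∃ ε' ∈ setProd (𝒮 x⁻¹⁻¹ : Set S) (𝒮 x⁻¹ : Set S), s * ε' = s)
    (hI : IsIdealOfComponent (𝒮 1) I) (hp : p ∈ 𝒮 x) (hq : q ∈ 𝒮 x⁻¹) (hi : i ∈ I) :
    p * q * i ∈ setProd (I : Set S) (setProd (𝒮 x : Set S) (𝒮 x⁻¹ : Set S) : Set S) := by
  have hqi : q * i ∈ 𝒮 x⁻¹ := by simpa using hmul hq (hI.1 hi)
  obtain ⟨ε', hε', hqiε'⟩ := hunit (q * i) hqi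
  rw [inv_inv] at hε'
  have hpqi : p * q * i ∈ I := (hI.2 _ (by simpa using hmul hp hq) i hi).1
  have : p * q * i = p * q * i * ε' := by simp only [mul_assoc, hqiε']
  rw [this]
  exact mul_mem_setProd_s11 hpqi hε'

theorem mul_mul_mem_setProd_mul_ideal
    (hmul : ∀ {x y : G} {a b : S}, a ∈ 𝒮 x → b ∈ 𝒮 y → a * b ∈ 𝒮 (x * y))
    (hunit : ∀ s ∈ 𝒮 x, ∃ ε ∈ setProd (𝒮 x : Set S) (𝒮 x⁻¹ : Set S), ε * s = s)
    (hI : IsIdealOfComponent (𝒮 1) I) (hp : p ∈ 𝒮 x) (hq : q ∈ 𝒮 x⁻¹) (hi : i ∈ I) :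
    i * (p * q) ∈ setProd (setProd (𝒮 x : Set S) (𝒮 x⁻¹ : Set S) : Set S) (I : Set S) := by
  have hip : i * p ∈ 𝒮 x := by simpa using hmul (hI.1 hi) hp
  obtain ⟨ε, hε, hεip⟩ := hunit (i * p) hip
  have hipq : i * p * q ∈ I := by
    simpa only [mul_assoc] using (hI.2 _ (by simpa using hmul hp hq) i hi).2
  have : i * (p * q) = ε * (i * p * q) := by rw [← mul_assoc ε, hεip, mul_assoc]
  rw [this]
  exact mul_mem_setProd_s11 hε hipq

end Graded

theorem ideal_epsilon_invariant_general {G : Type*} [Group G]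
    {S : Type*} [NonUnitalRing S] (𝒮 : G → AddSubgroup S)
    (hmul : ∀ {x y : G} {a b : S}, a ∈ 𝒮 x → b ∈ 𝒮 y → a * b ∈ 𝒮 (x * y))
    (hnes : ∀ x : G, ∀ s ∈ 𝒮 x,
      (∃ ε ∈ setProd (𝒮 x : Set S) (𝒮 x⁻¹ : Set S), ε * s = s) ∧
      (∃ ε' ∈ setProd (𝒮 x⁻¹ : Set S) (𝒮 x : Set S), s * ε' = s))
    (I : AddSubgroup S) (hI : IsIdealOfComponent (𝒮 (1 : G)) I) :
    ∀ x : G, setProd ((setProd (𝒮 x : Set S) (𝒮 x⁻¹ : Set S) : AddSubgroup S) : Set S)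
        (I : Set S) =
      setProd (I : Set S)
        ((setProd (𝒮 x : Set S) (𝒮 x⁻¹ : Set S) : AddSubgroup S) : Set S) := by
  intro x
  apply le_antisymm
  · rw [setProd_setProd_left, setProd_le_iff]
    rintro _ ⟨p, hp, q, hq, rfl⟩ i hi
    exact mul_mul_mem_ideal_mul_setProd hmul (fun s hs => (hnes x⁻¹ s hs).2) hI hp hq hi
  · rw [setProd_setProd_right, setProd_le_iff]
    rintro i hi _ ⟨p, hp, q, hq, rfl⟩
    exact mul_mul_mem_setProd_mul_ideal hmul (fun s hs => (hnes x s hs).1) hI hp hq hi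

/-- If `S` is nearly epsilon-strongly `G`-graded, then every ideal `I` of the principal
component `S_e` is `ε`-invariant, i.e. `S_x S_{x⁻¹} I = I S_x S_{x⁻¹}` for every `x ∈ G`. -/
theorem ideal_epsilon_invariant {G : Type*} [Group G] [DecidableEq G]
    {S : Type*} [NonUnitalRing S] (𝒮 : G → AddSubgroup S)
    [DirectSum.Decomposition 𝒮]
    (hmul : ∀ {x y : G} {a b : S}, a ∈ 𝒮 x → b ∈ 𝒮 y → a * b ∈ 𝒮 (x * y))
    (hnes : ∀ x : G, ∀ s ∈ 𝒮 x,
      (∃ ε ∈ setProd (𝒮 x : Set S) (𝒮 x⁻¹ : Set S), ε * s = s) ∧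
      (∃ ε' ∈ setProd (𝒮 x⁻¹ : Set S) (𝒮 x : Set S), s * ε' = s))
    (I : AddSubgroup S) (hI : IsIdealOfComponent (𝒮 (1 : G)) I) :
    ∀ x : G, setProd ((setProd (𝒮 x : Set S) (𝒮 x⁻¹ : Set S) : AddSubgroup S) : Set S)
        (I : Set S) =
      setProd (I : Set S)
        ((setProd (𝒮 x : Set S) (𝒮 x⁻¹ : Set S) : AddSubgroup S) : Set S) :=
  ideal_epsilon_invariant_general 𝒮 hmul hnes I hI
end

section
/- Suppose S is symmetrically G-graded, N is a normal subgroup of G, and I, J are ideals of S_N := ⊕_{n∈N} S_n. If I or J is ε-invariant (meaning S_x S_{x^{-1}} K = K S_x S_{x^{-1}} for all x ∈ G, where K is the ε-invariant one), then (IJ)^x = I^x J^x for every x ∈ G. -/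
open Pointwise

/-- For a `G`-graded ring with components `𝒮` and a subset `I ⊆ S`, the subset
`I^x := S_{x⁻¹} I S_x` (finite sums of triple products). -/
def gradedConj {G : Type*} [Group G] {S : Type*} [NonUnitalRing S]
    (𝒮 : G → AddSubgroup S) (I : Set S) (x : G) : AddSubgroup S :=
  setProd ((setProd (𝒮 x⁻¹ : Set S) I : AddSubgroup S) : Set S) (𝒮 x : Set S)

/-- A subset `K` of a `G`-graded ring is `ε`-invariant if
`S_x S_{x⁻¹} K = K S_x S_{x⁻¹}` for every `x ∈ G`. -/
def IsEpsilonInvariant {G : Type*} [Group G] {S : Type*} [NonUnitalRing S]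
    (𝒮 : G → AddSubgroup S) (K : Set S) : Prop :=
  ∀ x : G, setProd ((setProd (𝒮 x : Set S) (𝒮 x⁻¹ : Set S) : AddSubgroup S) : Set S) K =
    setProd K ((setProd (𝒮 x : Set S) (𝒮 x⁻¹ : Set S) : AddSubgroup S) : Set S)

/-!
Products of additive subgroups of `S` are, as additive submonoids, products in the semigroup
`AddSubmonoid S`, so the claim becomes a semigroup identity. With `a = S_{x⁻¹}` and `b = S_x` we
have `(a I b)(a J b) = a I (b a) J b`; the symmetric grading gives `a b a = a` and `b a b = b`, so
moving `ε_x = b a` past whichever of `I`, `J` commutes with it lets it be absorbed.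
-/

theorem toAddSubmonoid_setProd {S : Type*} [NonUnitalRing S] (A B : AddSubgroup S) :
    (setProd (A : Set S) (B : Set S)).toAddSubmonoid = A.toAddSubmonoid * B.toAddSubmonoid := by
  have hneg : -((A : Set S) * B) ⊆ (A : Set S) * B := by
    rintro _ ⟨a, ha, b, hb, hab⟩
    exact ⟨-a, neg_mem ha, b, hb, (neg_mul a b).trans (neg_eq_iff_eq_neg.2 hab)⟩
  rw [setProd, AddSubgroup.closure_toAddSubmonoid, Set.union_eq_left.2 hneg,
    AddSubmonoid.mul_eq_closure_mul_set]
  rfl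

section Semigroup

variable {M : Type*} [Semigroup M] {a b : M}

theorem sandwich_mul_sandwich_of_commute_left {i : M} (j : M) (haba : a * b * a = a)
    (hi : Commute (b * a) i) : a * i * b * (a * j * b) = a * (i * j) * b :=
  calc a * i * b * (a * j * b) = a * (i * (b * a)) * j * b := by simp only [mul_assoc]
    _ = a * b * a * i * j * b := by rw [← hi.eq]; simp only [mul_assoc]
    _ = a * (i * j) * b := by rw [haba]; simp only [mul_assoc]

theorem sandwich_mul_sandwich_of_commute_right (i : M) {j : M} (hbab : b * a * b = b)
    (hj : Commute (b * a) j) : a * i * b * (a * j * b) = a * (i * j) * b :=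
  calc a * i * b * (a * j * b) = a * i * (b * a * j) * b := by simp only [mul_assoc]
    _ = a * i * j * (b * a * b) := by rw [hj.eq]; simp only [mul_assoc]
    _ = a * (i * j) * b := by rw [hbab]; simp only [mul_assoc]

end Semigroup

theorem gradedConj_mul_of_epsilonInvariant_general {G : Type*} [Group G]
    {S : Type*} [NonUnitalRing S] (𝒮 : G → AddSubgroup S)
    (hsym : ∀ x : G,
      setProd ((setProd (𝒮 x : Set S) (𝒮 x⁻¹ : Set S) : AddSubgroup S) : Set S)
        (𝒮 x : Set S) = 𝒮 x)
    (I J : AddSubgroup S)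
    (hinv : IsEpsilonInvariant 𝒮 (I : Set S) ∨ IsEpsilonInvariant 𝒮 (J : Set S)) :
    ∀ x : G, gradedConj 𝒮 ((setProd (I : Set S) (J : Set S) : AddSubgroup S) : Set S) x =
      setProd ((gradedConj 𝒮 (I : Set S) x : AddSubgroup S) : Set S)
        ((gradedConj 𝒮 (J : Set S) x : AddSubgroup S) : Set S) := by
  intro x
  have hbab := congrArg AddSubgroup.toAddSubmonoid (hsym x)
  have haba := congrArg AddSubgroup.toAddSubmonoid (hsym x⁻¹)
  simp only [toAddSubmonoid_setProd, inv_inv] at hbab haba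
  apply AddSubgroup.toAddSubmonoid_injective
  simp only [gradedConj, toAddSubmonoid_setProd]
  rcases hinv with hI | hJ
  · have hI' := congrArg AddSubgroup.toAddSubmonoid (hI x)
    simp only [toAddSubmonoid_setProd] at hI'
    exact (sandwich_mul_sandwich_of_commute_left _ haba hI').symm
  · have hJ' := congrArg AddSubgroup.toAddSubmonoid (hJ x)
    simp only [toAddSubmonoid_setProd] at hJ'
    exact (sandwich_mul_sandwich_of_commute_right _ hbab hJ').symm

/-- Suppose `S` is symmetrically `G`-graded, `N` is a normal subgroup of `G`, and `I, J` are
ideals of `S_N := ⊕_{n ∈ N} S_n`. If `I` or `J` is `ε`-invariant, then `(IJ)^x = I^x J^x`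
for every `x ∈ G`. -/
theorem gradedConj_mul_of_epsilonInvariant {G : Type*} [Group G] [DecidableEq G]
    {S : Type*} [NonUnitalRing S] (𝒮 : G → AddSubgroup S)
    [DirectSum.Decomposition 𝒮]
    (hmul : ∀ {x y : G} {a b : S}, a ∈ 𝒮 x → b ∈ 𝒮 y → a * b ∈ 𝒮 (x * y))
    (hsym : ∀ x : G,
      setProd ((setProd (𝒮 x : Set S) (𝒮 x⁻¹ : Set S) : AddSubgroup S) : Set S)
        (𝒮 x : Set S) = 𝒮 x)
    (N : Subgroup G) (hN : N.Normal)
    (I J : AddSubgroup S)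
    (hI : IsIdealOfComponent (⨆ n ∈ N, 𝒮 n) I)
    (hJ : IsIdealOfComponent (⨆ n ∈ N, 𝒮 n) J)
    (hinv : IsEpsilonInvariant 𝒮 (I : Set S) ∨ IsEpsilonInvariant 𝒮 (J : Set S)) :
    ∀ x : G, gradedConj 𝒮 ((setProd (I : Set S) (J : Set S) : AddSubgroup S) : Set S) x =
      setProd ((gradedConj 𝒮 (I : Set S) x : AddSubgroup S) : Set S)
        ((gradedConj 𝒮 (J : Set S) x : AddSubgroup S) : Set S) :=
  gradedConj_mul_of_epsilonInvariant_general 𝒮 hsym I J hinv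
end

section
/- Let S be a G-graded ring, H a subgroup of G, and M ⊆ S. Define M^H := Σ_{h∈H} S_{h^{-1}} M S_h. Then M^H is an H-invariant subset of S. Moreover, if S_e is s-unital and I is an ideal of S_e, then I^G is the smallest G-invariant ideal of S_e containing I. -/
open Pointwise

/-- For a subset `K` of `G` and a subset `M` of `S`,
`M^K := Σ_{h ∈ K} S_{h⁻¹} M S_h`, as an additive subgroup of `S`. -/
def gradedConjSum {G : Type*} [Group G] {S : Type*} [NonUnitalRing S]
    (𝒮 : G → AddSubgroup S) (M : Set S) (K : Set G) : AddSubgroup S :=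
  ⨆ h ∈ K, gradedConj 𝒮 M h

section Aux
variable {G : Type*} [Group G] {S : Type*} [NonUnitalRing S] (𝒮 : G → AddSubgroup S)

lemma triple_mem' {N : Set S} {x : G} {a m b : S}
    (ha : a ∈ 𝒮 x⁻¹) (hm : m ∈ N) (hb : b ∈ 𝒮 x) :
    a * m * b ∈ gradedConj 𝒮 N x := by
  apply AddSubgroup.subset_closure
  exact Set.mul_mem_mul (AddSubgroup.subset_closure (Set.mul_mem_mul ha hm)) hb

lemma gradedConj_le' {N : Set S} {x : G} {J : AddSubgroup S}
    (h : ∀ a ∈ 𝒮 x⁻¹, ∀ m ∈ N, ∀ b ∈ 𝒮 x, a * m * b ∈ J) :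
    gradedConj 𝒮 N x ≤ J := by
  refine (AddSubgroup.closure_le J).mpr ?_
  rintro _ ⟨d, hd, b, hb, rfl⟩
  have : setProd ((𝒮 x⁻¹ : Set S)) N ≤ J.comap (AddMonoidHom.mulRight b) := by
    refine (AddSubgroup.closure_le _).mpr ?_
    rintro _ ⟨a, ha, m, hm, rfl⟩
    exact h a ha m hm b hb
  exact this hd

lemma le_gradedConjSum' {M : Set S} {K : Set G} {h : G} (hh : h ∈ K) :
    gradedConj 𝒮 M h ≤ gradedConjSum 𝒮 M K :=
  le_iSup_of_le h (le_iSup_of_le hh le_rfl)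

lemma gradedConjSum_le' {M : Set S} {K : Set G} {J : AddSubgroup S}
    (h : ∀ x ∈ K, gradedConj 𝒮 M x ≤ J) : gradedConjSum 𝒮 M K ≤ J :=
  iSup_le fun x => iSup_le fun hx => h x hx

lemma conj_conj' (hmul : ∀ {x y : G} {a b : S}, a ∈ 𝒮 x → b ∈ 𝒮 y → a * b ∈ 𝒮 (x * y))
    {M : Set S} {x h : G} {a b : S}
    (ha : a ∈ 𝒮 x⁻¹) (hb : b ∈ 𝒮 x) {c : S} (hc : c ∈ gradedConj 𝒮 M h) :
    a * c * b ∈ gradedConj 𝒮 M (h * x) := by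
  have key : gradedConj 𝒮 M h ≤ (gradedConj 𝒮 M (h * x)).comap
      ((AddMonoidHom.mulRight b).comp (AddMonoidHom.mulLeft a)) := by
    refine gradedConj_le' 𝒮 ?_
    intro p hp m hm q hq
    simp only [AddSubgroup.mem_comap, AddMonoidHom.comp_apply, AddMonoidHom.coe_mulRight,
      AddMonoidHom.coe_mulLeft]
    have h1 : a * p ∈ 𝒮 (h * x)⁻¹ := by rw [mul_inv_rev]; exact hmul ha hp
    have h2 : q * b ∈ 𝒮 (h * x) := hmul hq hb
    have := triple_mem' 𝒮 h1 hm h2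
    convert this using 1
    noncomm_ring
  exact key hc

lemma conjSum_invariant' (hmul : ∀ {x y : G} {a b : S}, a ∈ 𝒮 x → b ∈ 𝒮 y → a * b ∈ 𝒮 (x * y))
    {M : Set S} {K : Set G} {x : G} (hK : ∀ h ∈ K, h * x ∈ K) :
    (gradedConj 𝒮 ((gradedConjSum 𝒮 M K) : Set S) x : Set S) ⊆ gradedConjSum 𝒮 M K := by
  intro c hc
  refine gradedConj_le' 𝒮 ?_ hc
  intro a ha m hm b hb
  have key : gradedConjSum 𝒮 M K ≤ (gradedConjSum 𝒮 M K).comap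
      ((AddMonoidHom.mulRight b).comp (AddMonoidHom.mulLeft a)) := by
    refine gradedConjSum_le' 𝒮 fun h hh c' hc' => ?_
    exact le_gradedConjSum' 𝒮 (hK h hh) (conj_conj' 𝒮 hmul ha hb hc')
  exact key hm
end Aux

/-- Let `S` be a `G`-graded ring, `H` a subgroup of `G`, and `M ⊆ S`. Then
`M^H := Σ_{h ∈ H} S_{h⁻¹} M S_h` is an `H`-invariant subset of `S`. Moreover, if `S_e` is
`s`-unital and `I` is an ideal of `S_e`, then `I^G` is the smallest `G`-invariant ideal of
`S_e` containing `I`. -/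
theorem gradedConjSum_invariant {G : Type*} [Group G] [DecidableEq G]
    {S : Type*} [NonUnitalRing S] (𝒮 : G → AddSubgroup S)
    [DirectSum.Decomposition 𝒮]
    (hmul : ∀ {x y : G} {a b : S}, a ∈ 𝒮 x → b ∈ 𝒮 y → a * b ∈ 𝒮 (x * y))
    (H : Subgroup G) (M : Set S) :
    (∀ x ∈ H,
      (gradedConj 𝒮 ((gradedConjSum 𝒮 M (H : Set G)) : Set S) x : Set S) ⊆
        gradedConjSum 𝒮 M (H : Set G)) ∧
    ((∀ s ∈ 𝒮 (1 : G), (∃ u ∈ 𝒮 (1 : G), s * u = s) ∧ (∃ v ∈ 𝒮 (1 : G), v * s = s)) →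
      ∀ I : AddSubgroup S, IsIdealOfComponent (𝒮 (1 : G)) I →
        IsIdealOfComponent (𝒮 (1 : G)) (gradedConjSum 𝒮 (I : Set S) Set.univ) ∧
        I ≤ gradedConjSum 𝒮 (I : Set S) Set.univ ∧
        (∀ x : G, (gradedConj 𝒮 ((gradedConjSum 𝒮 (I : Set S) Set.univ) : Set S) x : Set S) ⊆
          gradedConjSum 𝒮 (I : Set S) Set.univ) ∧
        (∀ J : AddSubgroup S, IsIdealOfComponent (𝒮 (1 : G)) J →
          (∀ x : G, (gradedConj 𝒮 (J : Set S) x : Set S) ⊆ J) →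
          I ≤ J → gradedConjSum 𝒮 (I : Set S) Set.univ ≤ J)) := by
  constructor
  · intro x hx
    exact conjSum_invariant' 𝒮 hmul (fun h hh => H.mul_mem hh hx)
  · intro hsu I hI
    refine ⟨⟨?_, ?_⟩, ?_, ?_, ?_⟩
    · -- I^G ≤ 𝒮 1
      refine gradedConjSum_le' 𝒮 fun x _ => gradedConj_le' 𝒮 fun a ha m hm b hb => ?_
      have := hmul (hmul ha (hI.1 hm)) hb
      simpa using this
    · -- ideal property
      intro a haS b hb
      constructor
      · have key : gradedConjSum 𝒮 (I : Set S) Set.univ ≤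
            (gradedConjSum 𝒮 (I : Set S) Set.univ).comap (AddMonoidHom.mulLeft a) := by
          refine gradedConjSum_le' 𝒮 fun x _ c hc => ?_
          refine gradedConj_le' 𝒮 ?_ hc
          intro p hp m hm q hq
          simp only [AddSubgroup.mem_comap, AddMonoidHom.coe_mulLeft]
          have hp' : a * p ∈ 𝒮 x⁻¹ := by simpa using hmul haS hp
          have := le_gradedConjSum' 𝒮 (Set.mem_univ x) (triple_mem' 𝒮 hp' hm hq)
          convert this using 1
          noncomm_ring
        exact key hb
      · have key : gradedConjSum 𝒮 (I : Set S) Set.univ ≤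
            (gradedConjSum 𝒮 (I : Set S) Set.univ).comap (AddMonoidHom.mulRight a) := by
          refine gradedConjSum_le' 𝒮 fun x _ c hc => ?_
          refine gradedConj_le' 𝒮 ?_ hc
          intro p hp m hm q hq
          simp only [AddSubgroup.mem_comap, AddMonoidHom.coe_mulRight]
          have hq' : q * a ∈ 𝒮 x := by simpa using hmul hq haS
          have := le_gradedConjSum' 𝒮 (Set.mem_univ x) (triple_mem' 𝒮 hp hm hq')
          convert this using 1
          noncomm_ring
        exact key hb
    · -- I ≤ I^G
      intro s hs
      obtain ⟨⟨u, hu, hsu'⟩, ⟨v, hv, hvs⟩⟩ := hsu s (hI.1 hs)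
      have hv' : v ∈ 𝒮 ((1 : G))⁻¹ := by simpa using hv
      have hmem := le_gradedConjSum' 𝒮 (Set.mem_univ (1 : G)) (triple_mem' 𝒮 hv' hs hu)
      have heq : v * s * u = s := by rw [hvs, hsu']
      rwa [heq] at hmem
    · -- G-invariance
      intro x
      exact conjSum_invariant' 𝒮 hmul (fun h _ => Set.mem_univ _)
    · -- minimality
      intro J _ hJinv hIJ
      refine gradedConjSum_le' 𝒮 fun x _ => gradedConj_le' 𝒮 fun a ha m hm b hb => ?_
      exact hJinv x (triple_mem' 𝒮 ha (hIJ hm) hb)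
end

section
/- Let S be a non-degenerately G-graded ring and H a subgroup of G. If A is a left (resp. right) ideal of S, then π_H(A) is a left (resp. right) ideal of S_H; moreover if A is nonzero then π_H(A) is nonzero. -/
/-!
Multiplying by a homogeneous element of degree `h ∈ H` shifts degrees by `h`, which preserves
membership in `H`; hence `π_H` is `S_H`-linear on both sides and maps a one-sided ideal of `S` onto
a one-sided ideal of `S_H`. If `a ∈ A` has a nonzero component `a_x`, non-degeneracy gives
`t ∈ S_{x⁻¹}` with `t a_x ≠ 0` (resp. `a_x t ≠ 0`); this is the identity component of
`t a ∈ A` (resp. `a t`), which survives `π_H` because `1 ∈ H`.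
-/

open Pointwise
open scoped Classical

/-- The projection `π_H : S → S_H` of a `G`-graded ring onto the part supported on a subset
`H ⊆ G`: it sends `Σ_{x ∈ G} s_x` to `Σ_{x ∈ H} s_x`. -/
noncomputable def gradedProj {G : Type*} [Group G] [DecidableEq G]
    {S : Type*} [NonUnitalRing S] (𝒮 : G → AddSubgroup S) [DirectSum.Decomposition 𝒮]
    (H : Set G) (a : S) : S :=
  ∑ x ∈ (DirectSum.decompose 𝒮 a).support,
    if x ∈ H then ((DirectSum.decompose 𝒮 a) x : S) else 0

section

variable {ι M : Type*} [DecidableEq ι] [AddCommGroup M] (ℳ : ι → AddSubgroup M)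
  [DirectSum.Decomposition ℳ]

theorem exists_coe_decompose_ne_zero {a : M} (ha : a ≠ 0) :
    ∃ i, (DirectSum.decompose ℳ a i : M) ≠ 0 := by
  by_contra! h
  exact ha (by simpa [h] using (DirectSum.sum_support_decompose ℳ a).symm)

noncomputable def gradedProjHom (H : Set ι) : M →+ M :=
  (DirectSum.decomposeAddEquiv ℳ).symm.toAddMonoidHom.comp <|
    (DFinsupp.filterAddMonoidHom (fun i => ℳ i) (· ∈ H)).comp
      (DirectSum.decomposeAddEquiv ℳ).toAddMonoidHom

theorem decompose_gradedProjHom (H : Set ι) (a : M) :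
    DirectSum.decompose ℳ (gradedProjHom ℳ H a) = (DirectSum.decompose ℳ a).filter (· ∈ H) :=
  (DirectSum.decompose ℳ).apply_symm_apply _

theorem gradedProjHom_of_mem (H : Set ι) {i : ι} {v : M} (hv : v ∈ ℳ i) :
    gradedProjHom ℳ H v = if i ∈ H then v else 0 := by
  apply (DirectSum.decompose ℳ).injective
  rw [decompose_gradedProjHom]
  split_ifs with hi
  · rw [DirectSum.decompose_of_mem ℳ hv]
    exact DFinsupp.filter_single_pos _ _ hi
  · rw [DirectSum.decompose_of_mem ℳ hv, DirectSum.decompose_zero]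
    exact DFinsupp.filter_single_neg _ _ hi

theorem gradedProjHom_mem_iSup (H : Set ι) (a : M) :
    gradedProjHom ℳ H a ∈ ⨆ i ∈ H, ℳ i := by
  induction a using DirectSum.Decomposition.inductionOn ℳ with
  | zero => simp
  | homogeneous v =>
    rw [gradedProjHom_of_mem ℳ H v.2]
    split_ifs with hi
    · exact le_iSup₂ (f := fun i (_ : i ∈ H) => ℳ i) _ hi v.2
    · exact zero_mem _
  | add a b ha hb => rw [map_add]; exact add_mem ha hb

theorem decompose_gradedProjHom_apply_of_mem (H : Set ι) (a : M) {i : ι} (hi : i ∈ H) :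
    DirectSum.decompose ℳ (gradedProjHom ℳ H a) i = DirectSum.decompose ℳ a i := by
  rw [decompose_gradedProjHom, DFinsupp.filter_apply_pos _ hi]

end

def IsGradedMul {G S : Type*} [Mul G] [AddGroup S] [Mul S] (𝒮 : G → AddSubgroup S) : Prop :=
  ∀ {x y : G} {a b : S}, a ∈ 𝒮 x → b ∈ 𝒮 y → a * b ∈ 𝒮 (x * y)

section

variable {G : Type*} [Group G] [DecidableEq G] {S : Type*} [NonUnitalRing S]
  {𝒮 : G → AddSubgroup S} [DirectSum.Decomposition 𝒮]

theorem gradedProjHom_apply (H : Set G) (a : S) : gradedProjHom 𝒮 H a = gradedProj 𝒮 H a := by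
  conv_lhs => rw [← DirectSum.sum_support_decompose 𝒮 a, map_sum]
  exact Finset.sum_congr rfl fun x _ => gradedProjHom_of_mem 𝒮 H (DirectSum.decompose 𝒮 a x).2

theorem coe_decompose_mul_of_left_mem
    (hmul : IsGradedMul 𝒮)
    {z : G} {t : S} (ht : t ∈ 𝒮 z) (a : S) (y : G) :
    (DirectSum.decompose 𝒮 (t * a) y : S) = t * DirectSum.decompose 𝒮 a (z⁻¹ * y) := by
  induction a using DirectSum.Decomposition.inductionOn 𝒮 with
  | zero => simp
  | @homogeneous x v =>
    have htv : t * v ∈ 𝒮 (z * x) := hmul ht v.2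
    by_cases hy : z * x = y
    · rw [← hy, inv_mul_cancel_left, DirectSum.decompose_of_mem_same 𝒮 htv,
        DirectSum.decompose_of_mem_same 𝒮 v.2]
    · rw [DirectSum.decompose_of_mem_ne 𝒮 htv hy,
        DirectSum.decompose_of_mem_ne 𝒮 v.2 (mt eq_inv_mul_iff_mul_eq.mp hy), mul_zero]
  | add a b ha hb =>
    simp only [mul_add, DirectSum.decompose_add, DirectSum.add_apply, AddSubgroup.coe_add, ha, hb]

theorem coe_decompose_mul_of_right_mem
    (hmul : IsGradedMul 𝒮)
    {z : G} {t : S} (ht : t ∈ 𝒮 z) (a : S) (y : G) :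
    (DirectSum.decompose 𝒮 (a * t) y : S) = DirectSum.decompose 𝒮 a (y * z⁻¹) * t := by
  induction a using DirectSum.Decomposition.inductionOn 𝒮 with
  | zero => simp
  | @homogeneous x v =>
    have hvt : v * t ∈ 𝒮 (x * z) := hmul v.2 ht
    by_cases hy : x * z = y
    · rw [← hy, mul_inv_cancel_right, DirectSum.decompose_of_mem_same 𝒮 hvt,
        DirectSum.decompose_of_mem_same 𝒮 v.2]
    · rw [DirectSum.decompose_of_mem_ne 𝒮 hvt hy,
        DirectSum.decompose_of_mem_ne 𝒮 v.2 (mt eq_mul_inv_iff_mul_eq.mp hy), zero_mul]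
  | add a b ha hb =>
    simp only [add_mul, DirectSum.decompose_add, DirectSum.add_apply, AddSubgroup.coe_add, ha, hb]

theorem gradedProjHom_mul_of_mem_left
    (hmul : IsGradedMul 𝒮)
    {H : Subgroup G} {h : G} (hh : h ∈ H) {s : S} (hs : s ∈ 𝒮 h) (a : S) :
    gradedProjHom 𝒮 H (s * a) = s * gradedProjHom 𝒮 H a := by
  induction a using DirectSum.Decomposition.inductionOn 𝒮 with
  | zero => simp
  | @homogeneous x v =>
    rw [gradedProjHom_of_mem 𝒮 _ (hmul hs v.2), gradedProjHom_of_mem 𝒮 _ v.2, mul_ite_zero,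
      SetLike.mem_coe, SetLike.mem_coe, H.mul_mem_cancel_left hh]
  | add a b ha hb => rw [mul_add, map_add, ha, hb, map_add, mul_add]

theorem gradedProjHom_mul_of_mem_right
    (hmul : IsGradedMul 𝒮)
    {H : Subgroup G} {h : G} (hh : h ∈ H) {s : S} (hs : s ∈ 𝒮 h) (a : S) :
    gradedProjHom 𝒮 H (a * s) = gradedProjHom 𝒮 H a * s := by
  induction a using DirectSum.Decomposition.inductionOn 𝒮 with
  | zero => simp
  | @homogeneous x v =>
    rw [gradedProjHom_of_mem 𝒮 _ (hmul v.2 hs), gradedProjHom_of_mem 𝒮 _ v.2, ite_zero_mul,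
      SetLike.mem_coe, SetLike.mem_coe, H.mul_mem_cancel_right hh]
  | add a b ha hb => rw [add_mul, map_add, ha, hb, map_add, add_mul]

theorem gradedProjHom_mul_left
    (hmul : IsGradedMul 𝒮)
    {H : Subgroup G} {s : S} (hs : s ∈ ⨆ h ∈ H, 𝒮 h) (a : S) :
    gradedProjHom 𝒮 H (s * a) = s * gradedProjHom 𝒮 H a := by
  rw [iSup_subtype'] at hs
  refine AddSubgroup.iSup_induction _ hs
    (C := fun s => gradedProjHom 𝒮 H (s * a) = s * gradedProjHom 𝒮 H a)
    (fun h s hs => gradedProjHom_mul_of_mem_left hmul h.2 hs a) (by simp)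
    (fun s t hs ht => by rw [add_mul, map_add, hs, ht, add_mul])

theorem gradedProjHom_mul_right
    (hmul : IsGradedMul 𝒮)
    {H : Subgroup G} {s : S} (hs : s ∈ ⨆ h ∈ H, 𝒮 h) (a : S) :
    gradedProjHom 𝒮 H (a * s) = gradedProjHom 𝒮 H a * s := by
  rw [iSup_subtype'] at hs
  refine AddSubgroup.iSup_induction _ hs
    (C := fun s => gradedProjHom 𝒮 H (a * s) = gradedProjHom 𝒮 H a * s)
    (fun h s hs => gradedProjHom_mul_of_mem_right hmul h.2 hs a) (by simp)
    (fun s t hs ht => by rw [mul_add, map_add, hs, ht, mul_add])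

theorem map_gradedProjHom_ne_bot {H : Subgroup G} {A : AddSubgroup S} {b : S} (hbA : b ∈ A)
    (hb : (DirectSum.decompose 𝒮 b 1 : S) ≠ 0) : A.map (gradedProjHom 𝒮 H) ≠ ⊥ := by
  intro hbot
  have hmem := AddSubgroup.mem_map_of_mem (gradedProjHom 𝒮 H) hbA
  rw [hbot, AddSubgroup.mem_bot] at hmem
  rw [← decompose_gradedProjHom_apply_of_mem 𝒮 _ b H.one_mem, hmem] at hb
  simp at hb

theorem map_gradedProjHom_ne_bot_of_mul_left_mem
    (hmul : IsGradedMul 𝒮)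
    (hnd : ∀ x : G, ∀ s ∈ 𝒮 x, s ≠ 0 → ∃ t ∈ 𝒮 x⁻¹, t * s ≠ 0)
    (H : Subgroup G) {A : AddSubgroup S} (hA : ∀ s : S, ∀ a ∈ A, s * a ∈ A) (hA0 : A ≠ ⊥) :
    A.map (gradedProjHom 𝒮 H) ≠ ⊥ := by
  obtain ⟨a, haA, ha0⟩ := A.bot_or_exists_ne_zero.resolve_left hA0
  obtain ⟨x, hx⟩ := exists_coe_decompose_ne_zero 𝒮 ha0
  obtain ⟨t, ht, hta⟩ := hnd x _ (DirectSum.decompose 𝒮 a x).2 hx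
  refine map_gradedProjHom_ne_bot (hA t a haA) ?_
  rwa [coe_decompose_mul_of_left_mem hmul ht, inv_inv, mul_one]

theorem map_gradedProjHom_ne_bot_of_mul_right_mem
    (hmul : IsGradedMul 𝒮)
    (hnd : ∀ x : G, ∀ s ∈ 𝒮 x, s ≠ 0 → ∃ t ∈ 𝒮 x⁻¹, s * t ≠ 0)
    (H : Subgroup G) {A : AddSubgroup S} (hA : ∀ s : S, ∀ a ∈ A, a * s ∈ A) (hA0 : A ≠ ⊥) :
    A.map (gradedProjHom 𝒮 H) ≠ ⊥ := by
  obtain ⟨a, haA, ha0⟩ := A.bot_or_exists_ne_zero.resolve_left hA0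
  obtain ⟨x, hx⟩ := exists_coe_decompose_ne_zero 𝒮 ha0
  obtain ⟨t, ht, hat⟩ := hnd x _ (DirectSum.decompose 𝒮 a x).2 hx
  refine map_gradedProjHom_ne_bot (hA t a haA) ?_
  rwa [coe_decompose_mul_of_right_mem hmul ht, inv_inv, one_mul]

end

/-- Let `S` be a non-degenerately `G`-graded ring and `H` a subgroup of `G`. If `A` is a left
(resp. right) ideal of `S`, then `π_H(A)` is a left (resp. right) ideal of
`S_H := ⊕_{x ∈ H} S_x`; moreover, if `A` is nonzero then `π_H(A)` is nonzero. -/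
theorem gradedProj_ideal {G : Type*} [Group G] [DecidableEq G]
    {S : Type*} [NonUnitalRing S] (𝒮 : G → AddSubgroup S)
    [DirectSum.Decomposition 𝒮]
    (hmul : ∀ {x y : G} {a b : S}, a ∈ 𝒮 x → b ∈ 𝒮 y → a * b ∈ 𝒮 (x * y))
    (hnd : ∀ x : G, ∀ s ∈ 𝒮 x, s ≠ 0 →
      (∃ t ∈ 𝒮 x⁻¹, s * t ≠ 0) ∧ (∃ t ∈ 𝒮 x⁻¹, t * s ≠ 0))
    (H : Subgroup G) (A : AddSubgroup S) :
    ((∀ s : S, ∀ a ∈ A, s * a ∈ A) →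
      ∃ B : AddSubgroup S, (B : Set S) = gradedProj 𝒮 (H : Set G) '' (A : Set S) ∧
        B ≤ (⨆ h ∈ H, 𝒮 h : AddSubgroup S) ∧
        (∀ s ∈ (⨆ h ∈ H, 𝒮 h : AddSubgroup S), ∀ b ∈ B, s * b ∈ B) ∧
        (A ≠ ⊥ → B ≠ ⊥)) ∧
    ((∀ s : S, ∀ a ∈ A, a * s ∈ A) →
      ∃ B : AddSubgroup S, (B : Set S) = gradedProj 𝒮 (H : Set G) '' (A : Set S) ∧
        B ≤ (⨆ h ∈ H, 𝒮 h : AddSubgroup S) ∧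
        (∀ s ∈ (⨆ h ∈ H, 𝒮 h : AddSubgroup S), ∀ b ∈ B, b * s ∈ B) ∧
        (A ≠ ⊥ → B ≠ ⊥)) := by
  have hcoe : (A.map (gradedProjHom 𝒮 H) : Set S) = gradedProj 𝒮 H '' A := by
    rw [AddSubgroup.coe_map]
    exact Set.image_congr fun a _ => gradedProjHom_apply (H : Set G) a
  have hle : A.map (gradedProjHom 𝒮 H) ≤ ⨆ h ∈ H, 𝒮 h :=
    AddSubgroup.map_le_iff_le_comap.mpr fun a _ => gradedProjHom_mem_iSup 𝒮 H a
  refine ⟨fun hA => ⟨_, hcoe, hle, ?_, map_gradedProjHom_ne_bot_of_mul_left_mem hmul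
      (fun x s hs hs0 => (hnd x s hs hs0).2) H hA⟩,
    fun hA => ⟨_, hcoe, hle, ?_, map_gradedProjHom_ne_bot_of_mul_right_mem hmul
      (fun x s hs hs0 => (hnd x s hs hs0).1) H hA⟩⟩
  · rintro s hs _ ⟨a, ha, rfl⟩
    rw [← gradedProjHom_mul_left hmul hs a]
    exact AddSubgroup.mem_map_of_mem _ (hA s a ha)
  · rintro s hs _ ⟨a, ha, rfl⟩
    rw [← gradedProjHom_mul_right hmul hs a]
    exact AddSubgroup.mem_map_of_mem _ (hA s a ha)
end

section
/- If S is non-degenerately G-graded and N is a normal subgroup of G, then the induced G/N-grading on S (with components S_C := ⊕_{x∈C} S_x for cosets C ∈ G/N) is non-degenerate. -/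
open Pointwise

section Aux

variable {G : Type*} [Group G] [DecidableEq G]
    {S : Type*} [NonUnitalRing S] (𝒮 : G → AddSubgroup S)
    [DirectSum.Decomposition 𝒮]

theorem aux_proj_mul_right
    (hmul : ∀ {x y : G} {a b : S}, a ∈ 𝒮 x → b ∈ 𝒮 y → a * b ∈ 𝒮 (x * y))
    (a t : S) (g : G) (ht : t ∈ 𝒮 g⁻¹) :
    (DirectSum.decompose 𝒮 (a * t) 1 : S) = (DirectSum.decompose 𝒮 a g : S) * t := by
  classical
  conv_lhs => rw [← DirectSum.sum_support_decompose 𝒮 a, Finset.sum_mul,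
    DirectSum.decompose_sum]
  rw [DFinsupp.finset_sum_apply, AddSubmonoidClass.coe_finset_sum]
  rw [Finset.sum_eq_single g
    (fun i _ hi => DirectSum.decompose_of_mem_ne 𝒮 (hmul (SetLike.coe_mem _) ht)
      (fun h => hi (by have := mul_inv_eq_one.mp h; exact this)))
    (fun hg => by rw [DFinsupp.notMem_support_iff.mp hg]; simp)]
  exact DirectSum.decompose_of_mem_same 𝒮 (by simpa using hmul (SetLike.coe_mem ((DirectSum.decompose 𝒮 a) g)) ht)

theorem aux_proj_mul_left
    (hmul : ∀ {x y : G} {a b : S}, a ∈ 𝒮 x → b ∈ 𝒮 y → a * b ∈ 𝒮 (x * y))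
    (a t : S) (g : G) (ht : t ∈ 𝒮 g⁻¹) :
    (DirectSum.decompose 𝒮 (t * a) 1 : S) = t * (DirectSum.decompose 𝒮 a g : S) := by
  classical
  conv_lhs => rw [← DirectSum.sum_support_decompose 𝒮 a, Finset.mul_sum,
    DirectSum.decompose_sum]
  rw [DFinsupp.finset_sum_apply, AddSubmonoidClass.coe_finset_sum]
  rw [Finset.sum_eq_single g
    (fun i _ hi => DirectSum.decompose_of_mem_ne 𝒮 (hmul ht (SetLike.coe_mem _))
      (fun h => hi (by have := inv_mul_eq_one.mp h; exact this.symm)))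
    (fun hg => by rw [DFinsupp.notMem_support_iff.mp hg]; simp)]
  exact DirectSum.decompose_of_mem_same 𝒮 (by simpa using hmul ht (SetLike.coe_mem ((DirectSum.decompose 𝒮 a) g)))

end Aux

/-- If `S` is non-degenerately `G`-graded and `N` is a normal subgroup of `G`, then the
induced `G/N`-grading on `S`, with components `S_{xN} = ⊕_{n ∈ N} S_{xn}`, is
non-degenerate: for every `x ∈ G` and every nonzero `a ∈ S_{xN}`, both
`a S_{x⁻¹N} ≠ {0}` and `S_{x⁻¹N} a ≠ {0}`. -/
theorem induced_quotient_grading_nondegenerate {G : Type*} [Group G] [DecidableEq G]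
    {S : Type*} [NonUnitalRing S] (𝒮 : G → AddSubgroup S)
    [DirectSum.Decomposition 𝒮]
    (hmul : ∀ {x y : G} {a b : S}, a ∈ 𝒮 x → b ∈ 𝒮 y → a * b ∈ 𝒮 (x * y))
    (hnd : ∀ x : G, ∀ s ∈ 𝒮 x, s ≠ 0 →
      (∃ t ∈ 𝒮 x⁻¹, s * t ≠ 0) ∧ (∃ t ∈ 𝒮 x⁻¹, t * s ≠ 0))
    (N : Subgroup G) (hN : N.Normal) :
    ∀ x : G, ∀ a ∈ (⨆ n ∈ N, 𝒮 (x * n) : AddSubgroup S), a ≠ 0 →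
      (∃ b ∈ (⨆ n ∈ N, 𝒮 (x⁻¹ * n) : AddSubgroup S), a * b ≠ 0) ∧
      (∃ b ∈ (⨆ n ∈ N, 𝒮 (x⁻¹ * n) : AddSubgroup S), b * a ≠ 0) := by
  classical
  intro x a ha ha0
  -- the decomposition of `a` is supported on the coset `xN`
  have hsupp : ∀ g : G, (DirectSum.decompose 𝒮 a g : S) ≠ 0 → ∃ n ∈ N, g = x * n := by
    intro g hg
    by_contra hcon
    push_neg at hcon
    rw [iSup_subtype'] at ha
    refine hg ?_
    refine AddSubgroup.iSup_induction (x := a) (fun n : N => 𝒮 (x * n)) ha ?_ ?_ ?_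
    · intro n s hs
      have hne : (x * (n : G)) ≠ g := fun h => hcon n n.2 h.symm
      exact DirectSum.decompose_of_mem_ne 𝒮 hs hne
    · simp
    · intro s t hst htt
      simp [DirectSum.decompose_add, hst, htt]
  -- pick a nonzero homogeneous component of `a`
  have hda : DirectSum.decompose 𝒮 a ≠ 0 := by
    intro h
    exact ha0 (by simpa using congrArg (DirectSum.decompose 𝒮).symm h)
  obtain ⟨g, hg⟩ := DFinsupp.ne_iff.mp hda
  have hgS : (DirectSum.decompose 𝒮 a g : S) ≠ 0 := by simpa using hg
  obtain ⟨n, hn, hgn⟩ := hsupp g hgS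
  obtain ⟨⟨t, ht, hat⟩, ⟨t', ht', hta⟩⟩ :=
    hnd g (DirectSum.decompose 𝒮 a g : S) (SetLike.coe_mem _) hgS
  have hmem : ∀ {u : S}, u ∈ 𝒮 g⁻¹ → u ∈ (⨆ n ∈ N, 𝒮 (x⁻¹ * n) : AddSubgroup S) := by
    intro u hu
    have hm : x * n⁻¹ * x⁻¹ ∈ N := hN.conj_mem _ (inv_mem hn) _
    have : g⁻¹ = x⁻¹ * (x * n⁻¹ * x⁻¹) := by rw [hgn]; group
    refine AddSubgroup.mem_iSup_of_mem (x * n⁻¹ * x⁻¹)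
      (AddSubgroup.mem_iSup_of_mem hm ?_)
    rwa [← this]
  constructor
  · refine ⟨t, hmem ht, fun h => hat ?_⟩
    have := aux_proj_mul_right 𝒮 hmul a t g ht
    rw [h] at this
    simpa using this.symm
  · refine ⟨t', hmem ht', fun h => hta ?_⟩
    have := aux_proj_mul_left 𝒮 hmul a t' g ht'
    rw [h] at this
    simpa using this.symm
end
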